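/- arXiv:2101.09304 — 7 statements merged into one kernel-verified Lean document; each statement's English description precedes it below -/
import Mathlib

section
/- Let Q and R be probability measures on (0,1)^K. Then the induced observed cell probabilities coincide, i.e. π_{Q,h}/(1-π_{Q,0}) = π_{R,h}/(1-π_{R,0}) for all h ∈ H*, if and only if there exists a real number A > 0 such that m_{Q,h} = A · m_{R,h} for all h ∈ H*. -/
/-!
Expanding `q ^ h = ∏ₖ q_k ^ h_k (q_k + (1 - q_k)) ^ (1 - h_k)` shows `m_g = ∑_{h ≥ g} π_h`, and
Möbius inversion on the Boolean lattice gives `π_g = ∑_{h ≥ g} ± m_h`. Both transforms are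
upper triangular, so for `g ≠ 0` they only involve indices `h ≠ 0`; hence proportionality of the
vectors `(π_h)_{h ≠ 0}` and `(m_h)_{h ≠ 0}` is the same condition, with the same constant. Finally,
the observed cell probabilities are the vector `(π_h)_{h ≠ 0}` normalized by its sum `1 - π_0`,
and two positive vectors have the same normalization iff they are proportional.
-/

open Finset MeasureTheory
open scoped Classical

theorem forall_div_sum_eq_div_sum_iff {α 𝕜 : Type*} [Field 𝕜] [LinearOrder 𝕜]
    [IsStrictOrderedRing 𝕜] {s : Finset α} {x y : α → 𝕜}
    (hx : 0 < ∑ i ∈ s, x i) (hy : 0 < ∑ i ∈ s, y i) :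
    (∀ i ∈ s, x i / ∑ j ∈ s, x j = y i / ∑ j ∈ s, y j) ↔
      ∃ A, 0 < A ∧ ∀ i ∈ s, x i = A * y i := by
  constructor
  · intro h
    refine ⟨(∑ j ∈ s, x j) / ∑ j ∈ s, y j, div_pos hx hy, fun i hi => ?_⟩
    have := h i hi
    field_simp at this ⊢
    linarith
  · rintro ⟨A, hA, hxy⟩ i hi
    have hsum : ∑ j ∈ s, x j = A * ∑ j ∈ s, y j := by
      rw [mul_sum]
      exact sum_congr rfl hxy
    rw [hxy i hi, hsum, mul_div_mul_left _ _ hA.ne']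

theorem sum_filter_le_mul_eq_mul_of_ne_bot {α R : Type*} [Fintype α] [PartialOrder α]
    [OrderBot α] [CommSemiring R] {x y : α → R} {A : R} (hxy : ∀ h ≠ ⊥, x h = A * y h)
    (c : α → R) {g : α} (hg : g ≠ ⊥) :
    ∑ h with g ≤ h, c h * x h = A * ∑ h with g ≤ h, c h * y h := by
  rw [mul_sum]
  refine sum_congr rfl fun h hh => ?_
  rw [hxy h (ne_bot_of_le_ne_bot hg (mem_filter.1 hh).2), mul_left_comm]

theorem prod_sum_filter_le_eq_sum_filter_le_prod {ι β R : Type*} [Fintype ι] [Fintype β]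
    [Preorder β] [DecidableLE β] [CommSemiring R] (g : ι → β) (f : ι → β → R) :
    ∏ k, ∑ b with g k ≤ b, f k b = ∑ h with g ≤ h, ∏ k, f k (h k) := by
  rw [prod_univ_sum]
  congr 1
  ext h
  simp [Fintype.mem_piFinset, Pi.le_def]

section Pointwise

variable {ι R : Type*} [Fintype ι] [CommRing R]

def cellProb (h : ι → Bool) (q : ι → R) : R :=
  ∏ k, q k ^ (h k).toNat * (1 - q k) ^ (1 - (h k).toNat)

def boolMonomial (h : ι → Bool) (q : ι → R) : R :=
  ∏ k, q k ^ (h k).toNat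

theorem pow_toNat_eq_sum (g : Bool) (x : R) :
    x ^ g.toNat = ∑ b with g ≤ b, x ^ b.toNat * (1 - x) ^ (1 - b.toNat) := by
  cases g <;> simp [filter_insert, filter_singleton, Bool.le_iff_imp]

theorem pow_toNat_mul_one_sub_pow_eq_sum (g : Bool) (x : R) :
    x ^ g.toNat * (1 - x) ^ (1 - g.toNat) =
      ∑ b with g ≤ b, (-1) ^ (b.toNat - g.toNat) * x ^ b.toNat := by
  cases g
  · simp
    ring
  · simp [filter_insert, filter_singleton, Bool.le_iff_imp]

theorem boolMonomial_eq_sum_cellProb (g : ι → Bool) (q : ι → R) :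
    boolMonomial g q = ∑ h with g ≤ h, cellProb h q := by
  simp only [boolMonomial, cellProb, pow_toNat_eq_sum (g _),
    prod_sum_filter_le_eq_sum_filter_le_prod]

theorem cellProb_eq_sum_boolMonomial (g : ι → Bool) (q : ι → R) :
    cellProb g q = ∑ h with g ≤ h,
      (∏ k, (-1) ^ ((h k).toNat - (g k).toNat)) * boolMonomial h q := by
  simp only [boolMonomial, cellProb, pow_toNat_mul_one_sub_pow_eq_sum,
    prod_sum_filter_le_eq_sum_filter_le_prod, prod_mul_distrib]

@[simp]
theorem cellProb_bot (q : ι → R) : cellProb ⊥ q = ∏ k, (1 - q k) := by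
  simp [cellProb]

@[simp]
theorem boolMonomial_bot (q : ι → R) : boolMonomial ⊥ q = 1 := by
  simp [boolMonomial]

end Pointwise

section Unit

variable {ι : Type*} [Fintype ι] {q : ι → ℝ}

theorem cellProb_pos (h : ι → Bool) (hq : ∀ k, q k ∈ Set.Ioo 0 1) : 0 < cellProb h q :=
  prod_pos fun k _ => mul_pos (pow_pos (hq k).1 _) (pow_pos (sub_pos.2 (hq k).2) _)

theorem abs_cellProb_le_one (h : ι → Bool) (hq : ∀ k, q k ∈ Set.Icc 0 1) :
    |cellProb h q| ≤ 1 := by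
  rw [cellProb, abs_prod]
  refine prod_le_one (fun _ _ => abs_nonneg _) fun k _ => ?_
  have h0 : 0 ≤ 1 - q k := sub_nonneg.2 (hq k).2
  rw [abs_of_nonneg (mul_nonneg (pow_nonneg (hq k).1 _) (pow_nonneg h0 _))]
  exact mul_le_one₀ (pow_le_one₀ (hq k).1 (hq k).2) (pow_nonneg h0 _)
    (pow_le_one₀ h0 (by linarith [(hq k).1]))

theorem abs_boolMonomial_le_one (h : ι → Bool) (hq : ∀ k, q k ∈ Set.Icc 0 1) :
    |boolMonomial h q| ≤ 1 := by
  rw [boolMonomial, abs_prod]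
  refine prod_le_one (fun _ _ => abs_nonneg _) fun k _ => ?_
  rw [abs_of_nonneg (pow_nonneg (hq k).1 _)]
  exact pow_le_one₀ (hq k).1 (hq k).2

theorem continuous_cellProb (h : ι → Bool) : Continuous (cellProb h : (ι → ℝ) → ℝ) := by
  unfold cellProb
  fun_prop

theorem continuous_boolMonomial (h : ι → Bool) :
    Continuous (boolMonomial h : (ι → ℝ) → ℝ) := by
  unfold boolMonomial
  fun_prop

end Unit

theorem integral_pos_of_ae_pos {α : Type*} [MeasurableSpace α] {μ : Measure α} [NeZero μ]
    {f : α → ℝ} (hf : ∀ᵐ x ∂μ, 0 < f x) (hfi : Integrable f μ) : 0 < ∫ x, f x ∂μ := by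
  rw [integral_pos_iff_support_of_nonneg_ae (hf.mono fun _ => le_of_lt) hfi, pos_iff_ne_zero]
  intro h0
  have : ∀ᵐ x ∂μ, False :=
    (hf.and (measure_eq_zero_iff_ae_notMem.1 h0)).mono fun _ hx => hx.2 hx.1.ne'
  exact NeZero.ne μ (ae_eq_bot.1 (Filter.eventually_false_iff_eq_bot.1 this))

noncomputable section Measure

variable {ι : Type*} [Fintype ι] (μ : Measure (ι → ℝ))

-- The paper's `π_{μ,h}`, `m_{μ,h}` and `π̃_{μ,h}`.
def cellMass (h : ι → Bool) : ℝ :=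
  ∫ q, cellProb h q ∂μ

def mixedMoment (h : ι → Bool) : ℝ :=
  ∫ q, boolMonomial h q ∂μ

def observedCellProb (h : ι → Bool) : ℝ :=
  cellMass μ h / (1 - cellMass μ ⊥)

variable {μ} [IsFiniteMeasure μ] (hμ : ∀ᵐ q ∂μ, ∀ k, q k ∈ Set.Icc (0 : ℝ) 1)
include hμ

theorem integrable_cellProb (h : ι → Bool) : Integrable (cellProb h) μ :=
  .of_bound (continuous_cellProb h).aestronglyMeasurable 1
    (hμ.mono fun _ hq => abs_cellProb_le_one h hq)

theorem integrable_boolMonomial (h : ι → Bool) : Integrable (boolMonomial h) μ :=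
  .of_bound (continuous_boolMonomial h).aestronglyMeasurable 1
    (hμ.mono fun _ hq => abs_boolMonomial_le_one h hq)

theorem mixedMoment_eq_sum_cellMass (g : ι → Bool) :
    mixedMoment μ g = ∑ h with g ≤ h, cellMass μ h := by
  simp only [mixedMoment, cellMass, boolMonomial_eq_sum_cellProb g]
  exact integral_finsetSum _ fun h _ => integrable_cellProb hμ h

theorem cellMass_eq_sum_mixedMoment (g : ι → Bool) :
    cellMass μ g = ∑ h with g ≤ h,
      (∏ k, (-1) ^ ((h k).toNat - (g k).toNat)) * mixedMoment μ h := by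
  simp only [mixedMoment, cellMass, cellProb_eq_sum_boolMonomial g, ← integral_const_mul]
  exact integral_finsetSum _ fun h _ => (integrable_boolMonomial hμ h).const_mul _

theorem one_sub_cellMass_bot [IsProbabilityMeasure μ] :
    1 - cellMass μ ⊥ = ∑ h ∈ univ.erase ⊥, cellMass μ h := by
  have hsum : ∑ h, cellMass μ h = 1 := by
    simpa [mixedMoment] using (mixedMoment_eq_sum_cellMass hμ ⊥).symm
  rw [← hsum, ← add_sum_erase _ _ (mem_univ ⊥), add_sub_cancel_left]

end Measure

theorem cellMass_pos {ι : Type*} [Fintype ι] {μ : Measure (ι → ℝ)} [IsFiniteMeasure μ]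
    [NeZero μ] (hμ : ∀ᵐ q ∂μ, ∀ k, q k ∈ Set.Ioo (0 : ℝ) 1) (h : ι → Bool) :
    0 < cellMass μ h :=
  integral_pos_of_ae_pos (hμ.mono fun _ hq => cellProb_pos h hq)
    (integrable_cellProb (hμ.mono fun _ hq k => Set.Ioo_subset_Icc_self (hq k)) h)

section TwoMeasures

variable {ι : Type*} [Fintype ι] {Q R : Measure (ι → ℝ)}

theorem cellMass_eq_mul_iff_mixedMoment_eq_mul [IsFiniteMeasure Q] [IsFiniteMeasure R]
    (hQ : ∀ᵐ q ∂Q, ∀ k, q k ∈ Set.Icc (0 : ℝ) 1) (hR : ∀ᵐ q ∂ R, ∀ k, q k ∈ Set.Icc (0 : ℝ) 1)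
    (A : ℝ) :
    (∀ h ≠ ⊥, cellMass Q h = A * cellMass R h) ↔
      ∀ h ≠ ⊥, mixedMoment Q h = A * mixedMoment R h := by
  constructor
  · intro hcell g hg
    simpa [mixedMoment_eq_sum_cellMass hQ, mixedMoment_eq_sum_cellMass hR] using
      sum_filter_le_mul_eq_mul_of_ne_bot hcell 1 hg
  · intro hmom g hg
    rw [cellMass_eq_sum_mixedMoment hQ, cellMass_eq_sum_mixedMoment hR]
    exact sum_filter_le_mul_eq_mul_of_ne_bot hmom _ hg

theorem observedCellProb_eq_iff [Nonempty ι] [IsProbabilityMeasure Q] [IsProbabilityMeasure R]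
    (hQ : ∀ᵐ q ∂Q, ∀ k, q k ∈ Set.Ioo (0 : ℝ) 1) (hR : ∀ᵐ q ∂ R, ∀ k, q k ∈ Set.Ioo (0 : ℝ) 1) :
    (∀ h ≠ ⊥, observedCellProb Q h = observedCellProb R h) ↔
      ∃ A, 0 < A ∧ ∀ h ≠ ⊥, cellMass Q h = A * cellMass R h := by
  have hQ' := hQ.mono fun _ hq k => Set.Ioo_subset_Icc_self (hq k)
  have hR' := hR.mono fun _ hq k => Set.Ioo_subset_Icc_self (hq k)
  have htop : ⊤ ∈ univ.erase (⊥ : ι → Bool) := mem_erase.2 ⟨top_ne_bot, mem_univ _⟩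
  have key := forall_div_sum_eq_div_sum_iff
    (sum_pos (fun h _ => cellMass_pos hQ h) ⟨_, htop⟩)
    (sum_pos (fun h _ => cellMass_pos hR h) ⟨_, htop⟩)
  simpa [observedCellProb, one_sub_cellMass_bot hQ', one_sub_cellMass_bot hR'] using key

end TwoMeasures

/-- For probability measures `Q, R` on `(0,1)^K`, the induced observed cell
probabilities coincide, i.e. `π_{Q,h}/(1-π_{Q,0}) = π_{R,h}/(1-π_{R,0})` for all `h ∈ H*`,
iff there is a real `A > 0` with `m_{Q,h} = A · m_{R,h}` for all `h ∈ H*`. -/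
theorem stmt2 (K : ℕ) (hK : 1 ≤ K)
    (Q R : Measure (Fin K → ℝ)) [IsProbabilityMeasure Q] [IsProbabilityMeasure R]
    (hQ : ∀ᵐ q ∂Q, ∀ k, q k ∈ Set.Ioo (0 : ℝ) 1)
    (hR : ∀ᵐ q ∂ R, ∀ k, q k ∈ Set.Ioo (0 : ℝ) 1) :
    (∀ h : Fin K → Bool, h ≠ (fun _ => false) →
        (∫ q, ∏ k, q k ^ (h k).toNat * (1 - q k) ^ (1 - (h k).toNat) ∂Q) /
            (1 - ∫ q, ∏ k, (1 - q k) ∂Q) =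
          (∫ q, ∏ k, q k ^ (h k).toNat * (1 - q k) ^ (1 - (h k).toNat) ∂ R) /
            (1 - ∫ q, ∏ k, (1 - q k) ∂ R)) ↔
      ∃ A : ℝ, 0 < A ∧ ∀ h : Fin K → Bool, h ≠ (fun _ => false) →
        (∫ q, ∏ k, q k ^ (h k).toNat ∂Q) = A * ∫ q, ∏ k, q k ^ (h k).toNat ∂ R := by
  have : Nonempty (Fin K) := ⟨⟨0, hK⟩⟩
  have hbot (μ : Measure (Fin K → ℝ)) : ∫ q, ∏ k, (1 - q k) ∂μ = cellMass μ ⊥ := by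
    simp [cellMass]
  rw [hbot Q, hbot R]
  have hQ' := hQ.mono fun _ hq k => Set.Ioo_subset_Icc_self (hq k)
  have hR' := hR.mono fun _ hq k => Set.Ioo_subset_Icc_self (hq k)
  exact (observedCellProb_eq_iff hQ hR).trans <| exists_congr fun A =>
    and_congr_right fun _ => cellMass_eq_mul_iff_mixedMoment_eq_mul hQ' hR' A
end

section
/- Suppose 2J > K. Then there exist two J-class latent class model parameter sets (ν, q) and (ν', q'), each with class membership probabilities nonnegative and summing to 1, sampling probabilities in (0,1), and with the values q_{1k},...,q_{Jk} pairwise distinct for each k (likewise for q'), such that the induced observed cell probabilities coincide, π_h/(1-π_0) = π'_h/(1-π'_0) for all h ∈ H*, but π_0 ≠ π'_0. -/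
open Finset Polynomial

/-!
The `2J`-th forward difference with step `δ = 1/(2J+1)` annihilates every polynomial of degree
`< 2J`: the signed weights `(-1)^m C(2J, m)` at the nodes `m δ`, `0 ≤ m ≤ 2J`, integrate every
such polynomial to zero. If all sampling probabilities of a class equal the same `q`, then
`1 - π_0` and, for `h ≠ 0`, `π_h` are polynomials of degree `≤ K < 2J` in `q` vanishing
at `q = 0`.
Putting the positive weights (even `m ≥ 2`) and the negative ones (odd `m`) into two `J`-class
models therefore makes their unnormalized `π_h` and `1 - π_0` agree. The node `m = 0` is
invisible to these polynomials but makes the two total masses differ by one, so after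
normalization the ratios `π_h / (1 - π_0)` still agree while `π_0` does not.
-/

theorem Polynomial.sum_range_neg_one_pow_mul_choose_mul_eval {R : Type*} [CommRing R]
    {P : R[X]} {n : ℕ} (hP : P.natDegree < n) :
    ∑ m ∈ range (n + 1), (-1) ^ (n - m) * (n.choose m : R) * P.eval (m : R) = 0 := by
  have := congrFun (fwdDiff_iter_eq_zero_of_degree_lt hP) 0
  rw [fwdDiff_iter_eq_sum_shift] at this
  simpa using this

theorem Finset.sum_range_two_mul_add_one {M : Type*} [AddCommMonoid M] (f : ℕ → M) (J : ℕ) :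
    ∑ m ∈ range (2 * J + 1), f m = f 0 + ∑ j ∈ range J, (f (2 * j + 1) + f (2 * j + 2)) := by
  induction J with
  | zero => simp
  | succ J ih =>
    rw [show 2 * (J + 1) + 1 = 2 * J + 1 + 1 + 1 by ring, sum_range_succ, sum_range_succ, ih,
      sum_range_succ, add_assoc, add_assoc]

theorem Polynomial.eval_zero_add_sum_choose_even_eq_sum_choose_odd {R : Type*} [CommRing R]
    {P : R[X]} {J : ℕ} (hP : P.natDegree < 2 * J) (δ : R) :
    P.eval 0 + ∑ j : Fin J, ((2 * J).choose (2 * j + 2) : R) * P.eval ((2 * j + 2) * δ) =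
      ∑ j : Fin J, ((2 * J).choose (2 * j + 1) : R) * P.eval ((2 * j + 1) * δ) := by
  have hPδ : (P.comp (C δ * X)).natDegree < 2 * J :=
    (natDegree_comp_le.trans (mul_le_of_le_one_right (Nat.zero_le _)
      ((natDegree_C_mul_le _ _).trans natDegree_X_le))).trans_lt hP
  have h := (P.comp (C δ * X)).sum_range_neg_one_pow_mul_choose_mul_eval hPδ
  rw [sum_range_two_mul_add_one] at h
  have hsign : ∀ j ∈ range J,
      (-1 : R) ^ (2 * J - (2 * j + 1)) = -1 ∧ (-1 : R) ^ (2 * J - (2 * j + 2)) = 1 :=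
    fun j hj => have := mem_range.1 hj
      ⟨Odd.neg_one_pow ⟨J - j - 1, by omega⟩, Even.neg_one_pow ⟨J - j - 1, by omega⟩⟩
  rw [sum_congr rfl fun j hj => by rw [(hsign j hj).1, (hsign j hj).2]] at h
  simp only [eval_comp, eval_mul, eval_C, eval_X, Nat.sub_zero, Nat.choose_zero_right,
    (even_two_mul J).neg_one_pow, Nat.cast_zero, Nat.cast_one, zero_mul, one_mul, neg_mul,
    sum_add_distrib, sum_neg_distrib, Nat.cast_add, Nat.cast_mul, Nat.cast_ofNat,
    mul_comm δ] at h
  rw [Fin.sum_univ_eq_sum_range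
      (fun j => ((2 * J).choose (2 * j + 2) : R) * P.eval ((2 * j + 2) * δ)),
    Fin.sum_univ_eq_sum_range
      (fun j => ((2 * J).choose (2 * j + 1) : R) * P.eval ((2 * j + 1) * δ))]
  linear_combination h

noncomputable def cellPoly {K : ℕ} (h : Fin K → Bool) : ℝ[X] :=
  ∏ k, X ^ (h k).toNat * (1 - X) ^ (1 - (h k).toNat)

theorem eval_cellPoly {K : ℕ} (h : Fin K → Bool) (z : ℝ) :
    (cellPoly h).eval z = ∏ k, z ^ (h k).toNat * (1 - z) ^ (1 - (h k).toNat) := by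
  simp [cellPoly, eval_prod]

theorem natDegree_cellPoly_le {K : ℕ} (h : Fin K → Bool) : (cellPoly h).natDegree ≤ K := by
  unfold cellPoly
  refine (natDegree_prod_le _ _).trans
    ((sum_le_sum (g := fun _ => 1) fun k _ => ?_).trans_eq (by simp))
  cases h k <;> simp [(natDegree_sub_le _ _).trans]

theorem eval_zero_cellPoly {K : ℕ} {h : Fin K → Bool} (hh : h ≠ fun _ => false) :
    (cellPoly h).eval 0 = 0 := by
  obtain ⟨k, hk⟩ := Function.ne_iff.1 hh
  rw [eval_cellPoly]
  exact prod_eq_zero (mem_univ k) (by simp [Bool.of_not_eq_false hk])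

theorem natDegree_one_sub_one_sub_X_pow_le (K : ℕ) : (1 - (1 - X) ^ K : ℝ[X]).natDegree ≤ K :=
  (natDegree_sub_le _ _).trans <| max_le (by simp) <| natDegree_pow_le.trans <| by
    simpa using Nat.mul_le_mul_left K (natDegree_sub_le (1 : ℝ[X]) X)

section Normalize

variable {ι 𝕜 : Type*} [Fintype ι] [Field 𝕜] (α f : ι → 𝕜)

theorem sum_div_sum_mul : ∑ i, α i / (∑ j, α j) * f i = (∑ i, α i * f i) / ∑ j, α j := by
  rw [sum_div]
  exact sum_congr rfl fun i _ => div_mul_eq_mul_div _ _ _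

theorem one_sub_sum_mul_div_sum (hα : ∑ j, α j ≠ 0) :
    1 - (∑ i, α i * f i) / ∑ j, α j = (∑ i, α i * (1 - f i)) / ∑ j, α j := by
  rw [eq_div_iff hα, sub_mul, div_mul_cancel₀ _ hα]
  simp only [mul_sub, mul_one, sum_sub_distrib, one_mul]

end Normalize

section Mixture

variable {ι : Type*} [Fintype ι]

def PolyBalanced (K : ℕ) (α x β y : ι → ℝ) : Prop :=
  ∀ P : ℝ[X], P.natDegree ≤ K → P.eval 0 = 0 → ∑ i, α i * P.eval (x i) = ∑ i, β i * P.eval (y i)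

variable {K : ℕ} {α x β y : ι → ℝ}

theorem PolyBalanced.sum_mul_one_sub_one_sub_pow_eq (hbal : PolyBalanced K α x β y) :
    ∑ i, α i * (1 - (1 - x i) ^ K) = ∑ i, β i * (1 - (1 - y i) ^ K) := by
  simpa using hbal (1 - (1 - X) ^ K) (natDegree_one_sub_one_sub_X_pow_le K) (by simp)

theorem PolyBalanced.cell_div_one_sub_zero_cell_eq (hbal : PolyBalanced K α x β y)
    (hA : ∑ i, α i ≠ 0) (hB : ∑ i, β i ≠ 0) {h : Fin K → Bool} (hh : h ≠ fun _ => false) :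
    (∑ i, α i / (∑ j, α j) * ∏ k, x i ^ (h k).toNat * (1 - x i) ^ (1 - (h k).toNat)) /
        (1 - ∑ i, α i / (∑ j, α j) * ∏ _k : Fin K, (1 - x i)) =
      (∑ i, β i / (∑ j, β j) * ∏ k, y i ^ (h k).toNat * (1 - y i) ^ (1 - (h k).toNat)) /
        (1 - ∑ i, β i / (∑ j, β j) * ∏ _k : Fin K, (1 - y i)) := by
  have hcell := hbal (cellPoly h) (natDegree_cellPoly_le h) (eval_zero_cellPoly hh)
  simp only [eval_cellPoly] at hcell
  simp only [Fin.prod_const, sum_div_sum_mul, one_sub_sum_mul_div_sum _ _ hA,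
    one_sub_sum_mul_div_sum _ _ hB]
  rw [div_div_div_cancel_right₀ hA, div_div_div_cancel_right₀ hB, hcell,
    hbal.sum_mul_one_sub_one_sub_pow_eq]

theorem PolyBalanced.zero_cell_ne (hbal : PolyBalanced K α x β y)
    (hA : ∑ i, α i ≠ 0) (hB : ∑ i, β i ≠ 0) (hAB : ∑ i, α i ≠ ∑ i, β i)
    (hD : ∑ i, α i * (1 - (1 - x i) ^ K) ≠ 0) :
    ∑ i, α i / (∑ j, α j) * ∏ _k : Fin K, (1 - x i) ≠
      ∑ i, β i / (∑ j, β j) * ∏ _k : Fin K, (1 - y i) := by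
  intro h
  have h' := congrArg (1 - ·) h
  simp only [Fin.prod_const, sum_div_sum_mul, one_sub_sum_mul_div_sum _ _ hA,
    one_sub_sum_mul_div_sum _ _ hB, hbal.sum_mul_one_sub_one_sub_pow_eq] at h'
  rw [div_eq_div_iff hA hB] at h'
  exact hAB (mul_left_cancel₀ (hbal.sum_mul_one_sub_one_sub_pow_eq ▸ hD) h').symm

theorem sum_mul_one_sub_one_sub_pow_pos [Nonempty ι] (hK : K ≠ 0) (hα : ∀ i, 0 < α i)
    (hx : ∀ i, x i ∈ Set.Ioo (0 : ℝ) 1) : 0 < ∑ i, α i * (1 - (1 - x i) ^ K) :=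
  sum_pos (fun i _ => mul_pos (hα i) (sub_pos.2
    (pow_lt_one₀ (by linarith [(hx i).2]) (by linarith [(hx i).1]) hK))) univ_nonempty

end Mixture

theorem polyBalanced_choose {K J : ℕ} (hKJ : K < 2 * J) :
    PolyBalanced K (fun j : Fin J => ((2 * J).choose (2 * j + 2) : ℝ))
      (fun j => (2 * j + 2) / (2 * J + 1)) (fun j => ((2 * J).choose (2 * j + 1) : ℝ))
      (fun j => (2 * j + 1) / (2 * J + 1)) := fun P hP hP0 => by
  simpa [hP0, div_eq_mul_inv] using
    eval_zero_add_sum_choose_even_eq_sum_choose_odd (hP.trans_lt hKJ) _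

theorem stmt4_general (K J : ℕ) (hK : 2 ≤ K) (hJK : K < 2 * J) :
    ∃ (ν ν' : Fin J → ℝ) (q q' : Fin J → Fin K → ℝ),
      (∀ j, 0 ≤ ν j) ∧ (∀ j, 0 ≤ ν' j) ∧
      (∑ j, ν j = 1) ∧ (∑ j, ν' j = 1) ∧
      (∀ j k, q j k ∈ Set.Ioo (0 : ℝ) 1) ∧ (∀ j k, q' j k ∈ Set.Ioo (0 : ℝ) 1) ∧
      (∀ k, ∀ j j' : Fin J, j ≠ j' → q j k ≠ q j' k) ∧
      (∀ k, ∀ j j' : Fin J, j ≠ j' → q' j k ≠ q' j' k) ∧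
      (∀ h : Fin K → Bool, h ≠ (fun _ => false) →
        (∑ j, ν j * ∏ k, q j k ^ (h k).toNat * (1 - q j k) ^ (1 - (h k).toNat)) /
            (1 - ∑ j, ν j * ∏ k, (1 - q j k)) =
          (∑ j, ν' j * ∏ k, q' j k ^ (h k).toNat * (1 - q' j k) ^ (1 - (h k).toNat)) /
            (1 - ∑ j, ν' j * ∏ k, (1 - q' j k))) ∧
      (∑ j, ν j * ∏ k, (1 - q j k)) ≠ (∑ j, ν' j * ∏ k, (1 - q' j k)) := by
  set α : Fin J → ℝ := fun j => (2 * J).choose (2 * j + 2)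
  set β : Fin J → ℝ := fun j => (2 * J).choose (2 * j + 1)
  set x : Fin J → ℝ := fun j => (2 * j + 2) / (2 * J + 1)
  set y : Fin J → ℝ := fun j => (2 * j + 1) / (2 * J + 1)
  have hbal : PolyBalanced K α x β y := polyBalanced_choose hJK
  have hAB : 1 + ∑ j, α j = ∑ j, β j := by
    simpa using eval_zero_add_sum_choose_even_eq_sum_choose_odd (P := 1) (by simp; omega) (0 : ℝ)
  have : Nonempty (Fin J) := ⟨⟨0, by omega⟩⟩
  have hα : ∀ j, 0 < α j := fun j => Nat.cast_pos.2 (Nat.choose_pos (by omega))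
  have hA : 0 < ∑ j, α j := sum_pos (fun j _ => hα j) univ_nonempty
  have hB : 0 < ∑ j, β j := by linarith
  have hx : ∀ j, x j ∈ Set.Ioo (0 : ℝ) 1 := fun j =>
    ⟨by positivity, (div_lt_one (by positivity)).2 (by norm_cast; omega)⟩
  have hy : ∀ j, y j ∈ Set.Ioo (0 : ℝ) 1 := fun j =>
    ⟨by positivity, (div_lt_one (by positivity)).2 (by norm_cast; omega)⟩
  have hx_inj : Function.Injective x := fun j j' h =>
    Fin.ext (by simpa [x, div_left_inj' (by positivity : (2 * J + 1 : ℝ) ≠ 0)] using h)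
  have hy_inj : Function.Injective y := fun j j' h =>
    Fin.ext (by simpa [y, div_left_inj' (by positivity : (2 * J + 1 : ℝ) ≠ 0)] using h)
  refine ⟨fun j => α j / ∑ i, α i, fun j => β j / ∑ i, β i, fun j _ => x j, fun j _ => y j,
    fun j => by positivity, fun j => by positivity, by simp [← sum_div, hA.ne'],
    by simp [← sum_div, hB.ne'], fun j _ => hx j, fun j _ => hy j,
    fun _ _ _ hne => hx_inj.ne hne, fun _ _ _ hne => hy_inj.ne hne,
    fun h hh => hbal.cell_div_one_sub_zero_cell_eq hA.ne' hB.ne' hh,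
    hbal.zero_cell_ne hA.ne' hB.ne' (by linarith)
      (sum_mul_one_sub_one_sub_pow_pos (by omega) hα hx).ne'⟩

/-- If `2J > K`, then the `J`-class latent class model is not conditionally
identifiable: there exist two parameter sets `(ν, q)` and `(ν', q')` (class probabilities
nonnegative summing to one, sampling probabilities in `(0,1)`, pairwise distinct across
classes for each list) whose induced observed cell probabilities coincide on `H*` but
whose unobserved cell probabilities `π_0` differ. -/
theorem stmt4 (K J : ℕ) (hK : 2 ≤ K) (hJ : 1 ≤ J) (hJK : K < 2 * J) :
    ∃ (ν ν' : Fin J → ℝ) (q q' : Fin J → Fin K → ℝ),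
      (∀ j, 0 ≤ ν j) ∧ (∀ j, 0 ≤ ν' j) ∧
      (∑ j, ν j = 1) ∧ (∑ j, ν' j = 1) ∧
      (∀ j k, q j k ∈ Set.Ioo (0 : ℝ) 1) ∧ (∀ j k, q' j k ∈ Set.Ioo (0 : ℝ) 1) ∧
      (∀ k, ∀ j j' : Fin J, j ≠ j' → q j k ≠ q j' k) ∧
      (∀ k, ∀ j j' : Fin J, j ≠ j' → q' j k ≠ q' j' k) ∧
      (∀ h : Fin K → Bool, h ≠ (fun _ => false) →
        (∑ j, ν j * ∏ k, q j k ^ (h k).toNat * (1 - q j k) ^ (1 - (h k).toNat)) /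
            (1 - ∑ j, ν j * ∏ k, (1 - q j k)) =
          (∑ j, ν' j * ∏ k, q' j k ^ (h k).toNat * (1 - q' j k) ^ (1 - (h k).toNat)) /
            (1 - ∑ j, ν' j * ∏ k, (1 - q' j k))) ∧
      (∑ j, ν j * ∏ k, (1 - q j k)) ≠ (∑ j, ν' j * ∏ k, (1 - q' j k)) :=
  stmt4_general K J hK hJK
end

section
/- Let K ≥ 2 and let x_{ℓk} ∈ (0,1) for ℓ, k ∈ {1,...,K} be such that for each k the values x_{1k},...,x_{Kk} are pairwise distinct. Consider the (2^K - 1) × K matrix X^K whose rows are indexed by h ∈ H* and whose (h, ℓ) entry is ∏_{k=1}^K x_{ℓk}^{h_k}. Then X^K has full column rank; that is, if v ∈ ℝ^K satisfies ∑_{ℓ=1}^K v_ℓ ∏_{k=1}^K x_{ℓk}^{h_k} = 0 for all h ∈ H*, then v = 0. -/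
/-!
To show `v l₀ = 0`, evaluate `P(y) = y_{l₀} * ∏_{k ≠ l₀} (y_k - x_{kk})` at the rows `x_l`.
Expanded, `P` is a combination of the square-free monomials `∏_{k ∈ S} y_k` with `l₀ ∈ S`, so
`∑_l v_l P(x_l) = 0`. But `P(x_l)` vanishes for `l ≠ l₀` through its factor `k = l`, while
`P(x_{l₀}) ≠ 0` since `x_{l₀ l₀} > 0` and the entries of each column are distinct.
-/

open Finset

theorem Finset.prod_pow_toNat_decide_mem {ι M : Type*} [Fintype ι] [DecidableEq ι]
    [CommMonoid M] (s : Finset ι) (a : ι → M) :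
    ∏ i, a i ^ (decide (i ∈ s)).toNat = ∏ i ∈ s, a i := by
  rw [← univ_inter s, ← prod_ite_mem]
  exact prod_congr rfl fun i _ => by by_cases h : i ∈ s <;> simp [h]

theorem Finset.sum_mul_prod_sub_eq_zero {ι κ R : Type*} [Fintype ι] [DecidableEq κ] [CommRing R]
    (u : ι → R) (p : ι → κ → R) (c : κ → R) (A : Finset κ)
    (hu : ∀ T ⊆ A, ∑ i, u i * ∏ k ∈ T, p i k = 0) :
    ∑ i, u i * ∏ k ∈ A, (p i k - c k) = 0 := by
  calc ∑ i, u i * ∏ k ∈ A, (p i k - c k)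
      = ∑ T ∈ A.powerset, (-1) ^ #T * (∏ k ∈ T, c k) * ∑ i, u i * ∏ k ∈ A \ T, p i k := by
        simp_rw [prod_sub, mul_sum]
        rw [sum_comm]
        exact sum_congr rfl fun _ _ => sum_congr rfl fun _ _ => by ring
    _ = 0 := sum_eq_zero fun T _ => by rw [hu _ sdiff_subset, mul_zero]

theorem stmt5_general (K : ℕ) (x : Fin K → Fin K → ℝ)
    (hx : ∀ l k, x l k ∈ Set.Ioo (0 : ℝ) 1)
    (hdist : ∀ k, ∀ l l' : Fin K, l ≠ l' → x l k ≠ x l' k)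
    (v : Fin K → ℝ)
    (hv : ∀ h : Fin K → Bool, h ≠ (fun _ => false) →
      ∑ l, v l * ∏ k, x l k ^ (h k).toNat = 0) :
    v = 0 := by
  funext l₀
  have hrows : ∀ T ⊆ univ.erase l₀, ∑ l, v l * x l l₀ * ∏ k ∈ T, x l k = 0 := by
    intro T hT
    have hl₀ : l₀ ∉ T := fun h => by simpa using hT h
    have := hv (fun k => decide (k ∈ insert l₀ T)) fun h => by simpa using congrFun h l₀
    simpa only [prod_pow_toNat_decide_mem, prod_insert hl₀, mul_assoc] using this
  have key := sum_mul_prod_sub_eq_zero _ x (fun k => x k k) _ hrows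
  rw [sum_eq_single l₀ (fun l _ hl => by
    rw [prod_eq_zero (mem_erase.2 ⟨hl, mem_univ l⟩) (sub_self (x l l)), mul_zero]) (by simp)] at key
  have hprod : ∏ k ∈ univ.erase l₀, (x l₀ k - x k k) ≠ 0 :=
    prod_ne_zero_iff.2 fun k hk => sub_ne_zero.2 (hdist k l₀ k (mem_erase.1 hk).1.symm)
  simpa [hprod, (hx l₀ l₀).1.ne'] using key

/-- For `K ≥ 2` and `x_{ℓk} ∈ (0,1)` with, for each `k`, the values
`x_{1k},...,x_{Kk}` pairwise distinct, the `(2^K - 1) × K` matrix with rows indexed by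
`h ∈ H*` and `(h, ℓ)` entry `∏_k x_{ℓk}^{h_k}` has full column rank: if
`∑_ℓ v_ℓ ∏_k x_{ℓk}^{h_k} = 0` for all `h ∈ H*`, then `v = 0`. -/
theorem stmt5 (K : ℕ) (hK : 2 ≤ K) (x : Fin K → Fin K → ℝ)
    (hx : ∀ l k, x l k ∈ Set.Ioo (0 : ℝ) 1)
    (hdist : ∀ k, ∀ l l' : Fin K, l ≠ l' → x l k ≠ x l' k)
    (v : Fin K → ℝ)
    (hv : ∀ h : Fin K → Bool, h ≠ (fun _ => false) →
      ∑ l, v l * ∏ k, x l k ^ (h k).toNat = 0) :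
    v = 0 :=
  stmt5_general K x hx hdist v hv
end

section
/- Let J ≥ 1, let K be an integer with 1 ≤ K < 2J, and let 0 < α < 1/(2J). Define ν_{Q,j} = binom(2J, 2j)/(2^{2J-1} - 1) and ν_{R,j} = binom(2J, 2j-1)/2^{2J-1} for j = 1,...,J, and q_{Q,jk} = α(2j), q_{R,jk} = α(2j-1) for j = 1,...,J and k = 1,...,K. Then for every h ∈ H*, ∑_{j=1}^J ν_{Q,j} ∏_{k=1}^K q_{Q,jk}^{h_k} = A · ∑_{j=1}^J ν_{R,j} ∏_{k=1}^K q_{R,jk}^{h_k}, where A = 2^{2J-1}/(2^{2J-1} - 1) ≠ 1. -/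
/-! For `0 < m < n` the `n`-th forward difference of `x ↦ x ^ m` vanishes, i.e.
`∑ₖ (-1)^(n-k) C(n,k) k^m = 0`. For `n = 2J` this says that the even-`k` and odd-`k` parts of
`∑ₖ C(2J,k) k^m` agree. Taking for `m ≤ K < 2J` the number of ones of `h` and pulling out
the common factor `α^m`, both sides of the identity are these two parts divided by
`2^(2J-1) - 1`. -/

open Finset

theorem sum_range_two_mul_add_one_eq_sum_even_add_sum_odd {M : Type*} [AddCommMonoid M]
    (f : ℕ → M) (n : ℕ) :
    ∑ k ∈ range (2 * n + 1), f k =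
      ∑ j ∈ range (n + 1), f (2 * j) + ∑ j ∈ range n, f (2 * j + 1) := by
  induction n with
  | zero => simp
  | succ n ih =>
    rw [show 2 * (n + 1) + 1 = 2 * n + 1 + 1 + 1 by ring, sum_range_succ, sum_range_succ, ih,
      sum_range_succ (fun j => f (2 * j)) (n + 1), sum_range_succ (fun j => f (2 * j + 1)) n,
      show 2 * n + 1 + 1 = 2 * (n + 1) by ring]
    abel

theorem sum_neg_one_pow_mul_choose_mul_pow_eq_zero {R : Type*} [CommRing R] {m n : ℕ}
    (hmn : m < n) :
    ∑ k ∈ range (n + 1), (-1 : R) ^ (n - k) * n.choose k * (k : R) ^ m = 0 := by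
  have h := congr_fun (fwdDiff_iter_pow_eq_zero_of_lt (R := R) hmn) 0
  rw [fwdDiff_iter_eq_sum_shift] at h
  simpa [zsmul_eq_mul] using h

theorem sum_choose_even_mul_pow_eq_sum_choose_odd {R : Type*} [CommRing R] {m J : ℕ}
    (hm : m < 2 * J) :
    ∑ j ∈ range (J + 1), ((2 * J).choose (2 * j) : R) * (2 * j : R) ^ m =
      ∑ j ∈ range J, ((2 * J).choose (2 * j + 1) : R) * (2 * j + 1 : R) ^ m := by
  have h := sum_neg_one_pow_mul_choose_mul_pow_eq_zero (R := R) hm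
  rw [sum_range_two_mul_add_one_eq_sum_even_add_sum_odd] at h
  rw [← sub_eq_zero, ← h, sub_eq_add_neg, ← sum_neg_distrib]
  congr 1
  · refine sum_congr rfl fun j _ => ?_
    have : Even (2 * J - 2 * j) := ⟨J - j, by omega⟩
    push_cast
    rw [this.neg_one_pow, one_mul]
  · refine sum_congr rfl fun j hj => ?_
    have : Odd (2 * J - (2 * j + 1)) := ⟨J - j - 1, by have := mem_range.1 hj; omega⟩
    push_cast
    rw [this.neg_one_pow]
    ring

theorem sum_fin_choose_even_mul_pow_eq_sum_fin_choose_odd {R : Type*} [CommRing R] {m J : ℕ}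
    (hm0 : 0 < m) (hm : m < 2 * J) (a : R) :
    ∑ j : Fin J, ((2 * J).choose (2 * (j.1 + 1)) : R) * (a * (2 * ((j.1 : R) + 1))) ^ m =
      ∑ j : Fin J,
        ((2 * J).choose (2 * (j.1 + 1) - 1) : R) * (a * (2 * ((j.1 : R) + 1) - 1)) ^ m := by
  have h := sum_choose_even_mul_pow_eq_sum_choose_odd (R := R) hm
  rw [sum_range_succ'] at h
  simp only [Nat.cast_zero, mul_zero, zero_pow hm0.ne', add_zero] at h
  rw [Fin.sum_univ_eq_sum_range
      (fun j => ((2 * J).choose (2 * (j + 1)) : R) * (a * (2 * ((j : R) + 1))) ^ m),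
    Fin.sum_univ_eq_sum_range
      (fun j => ((2 * J).choose (2 * (j + 1) - 1) : R) * (a * (2 * ((j : R) + 1) - 1)) ^ m)]
  push_cast at h
  simp only [mul_pow a, mul_left_comm _ (a ^ m), ← mul_sum, h]
  congr 1
  refine sum_congr rfl fun j _ => ?_
  rw [show 2 * (j + 1) - 1 = 2 * j + 1 by omega]
  ring

theorem div_sub_one_ne_one {K : Type*} [Field K] (x : K) : x / (x - 1) ≠ 1 := by
  intro h
  have hx : x - 1 ≠ 0 := fun h0 => by rw [h0, div_zero] at h; exact zero_ne_one h
  exact one_ne_zero (sub_eq_self.1 ((div_eq_one_iff_eq hx).1 h).symm)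

theorem Bool.sum_toNat_pos {ι : Type*} [Fintype ι] {h : ι → Bool} (hh : h ≠ fun _ => false) :
    0 < ∑ k, (h k).toNat := by
  obtain ⟨k, hk⟩ := Function.ne_iff.1 hh
  calc 0 < (h k).toNat := by simp_all
    _ ≤ ∑ k, (h k).toNat :=
      single_le_sum (f := fun k => (h k).toNat) (fun _ _ => Nat.zero_le _) (mem_univ k)

theorem Bool.sum_toNat_le_card {ι : Type*} [Fintype ι] (h : ι → Bool) :
    ∑ k, (h k).toNat ≤ Fintype.card ι := by
  simpa using sum_le_card_nsmul univ (fun k => (h k).toNat) 1 fun k _ => Bool.toNat_le (h k)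

theorem stmt7_general (K J : ℕ) (hKJ : K < 2 * J)
    (α : ℝ) :
    (∀ h : Fin K → Bool, h ≠ (fun _ => false) →
        (∑ j : Fin J, (((2 * J).choose (2 * (j.1 + 1)) : ℝ) / ((2 : ℝ) ^ (2 * J - 1) - 1)) *
            ∏ k, (α * (2 * ((j.1 : ℝ) + 1))) ^ (h k).toNat) =
          ((2 : ℝ) ^ (2 * J - 1) / ((2 : ℝ) ^ (2 * J - 1) - 1)) *
            ∑ j : Fin J, (((2 * J).choose (2 * (j.1 + 1) - 1) : ℝ) / (2 : ℝ) ^ (2 * J - 1)) *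
              ∏ k, (α * (2 * ((j.1 : ℝ) + 1) - 1)) ^ (h k).toNat) ∧
      (2 : ℝ) ^ (2 * J - 1) / ((2 : ℝ) ^ (2 * J - 1) - 1) ≠ 1 := by
  set D : ℝ := 2 ^ (2 * J - 1)
  refine ⟨fun h hh => ?_, div_sub_one_ne_one D⟩
  have hM := sum_fin_choose_even_mul_pow_eq_sum_fin_choose_odd (Bool.sum_toNat_pos hh)
    ((Bool.sum_toNat_le_card h).trans_lt (by simpa using hKJ)) α
  have hD : D ≠ 0 := by positivity
  simp only [prod_pow_eq_pow_sum, div_mul_eq_mul_div, ← sum_div, hM]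
  field_simp

/-- For `J ≥ 1`, `1 ≤ K < 2J`, and `0 < α < 1/(2J)`, the latent class models
with `ν_{Q,j} = C(2J, 2j)/(2^{2J-1} - 1)`, `ν_{R,j} = C(2J, 2j-1)/2^{2J-1}`,
`q_{Q,jk} = α(2j)`, `q_{R,jk} = α(2j-1)` (for `j = 1,...,J`) satisfy, for every `h ∈ H*`,
`∑_j ν_{Q,j} ∏_k q_{Q,jk}^{h_k} = A · ∑_j ν_{R,j} ∏_k q_{R,jk}^{h_k}`, where
`A = 2^{2J-1}/(2^{2J-1} - 1) ≠ 1`. (Here `j : Fin J` represents the index `j.1 + 1`.) -/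
theorem stmt7 (K J : ℕ) (hK : 1 ≤ K) (hJ : 1 ≤ J) (hKJ : K < 2 * J)
    (α : ℝ) (hα0 : 0 < α) (hα1 : α < 1 / (2 * J)) :
    (∀ h : Fin K → Bool, h ≠ (fun _ => false) →
        (∑ j : Fin J, (((2 * J).choose (2 * (j.1 + 1)) : ℝ) / ((2 : ℝ) ^ (2 * J - 1) - 1)) *
            ∏ k, (α * (2 * ((j.1 : ℝ) + 1))) ^ (h k).toNat) =
          ((2 : ℝ) ^ (2 * J - 1) / ((2 : ℝ) ^ (2 * J - 1) - 1)) *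
            ∑ j : Fin J, (((2 * J).choose (2 * (j.1 + 1) - 1) : ℝ) / (2 : ℝ) ^ (2 * J - 1)) *
              ∏ k, (α * (2 * ((j.1 : ℝ) + 1) - 1)) ^ (h k).toNat) ∧
      (2 : ℝ) ^ (2 * J - 1) / ((2 : ℝ) ^ (2 * J - 1) - 1) ≠ 1 :=
  stmt7_general K J hKJ α
end

section
/- Let K ≥ 3, 1 < K' < K, and let (n_h)_{h ∈ H*} be nonnegative reals with total n = ∑_{h ∈ H*} n_h > 0 and sample proportions π̃_h = n_h/n. Let G = {0,1}^{K'}, G* = G \ {0}, and define marginal proportions π̃_{g+} = ∑_{h ∈ H*} π̃_h I((h_1,...,h_{K'}) = g) for g ∈ G, with π̃_{0+} the value at g = (0,...,0). Assume π̃_{g+} > 0 for all g ∈ G* and π̃_{0+} < 1. Let n† = n(1 - π̃_{0+}) and π̃†_g = π̃_{g+}/(1 - π̃_{0+}) for g ∈ G*. Then n·[1 + Π̃_{odd,+}/Π̃_{even,+} - π̃_{0+}] = n†·[1 + Π̃†_{odd}/Π̃†_{even}], where Π̃_{odd,+} = ∏_{g ∈ G*} π̃_{g+}^{I_odd(g)},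 Π̃_{even,+} = ∏_{g ∈ G*} π̃_{g+}^{I_even(g)}, Π̃†_{odd} = ∏_{g ∈ G*} (π̃†_g)^{I_odd(g)}, and Π̃†_{even} = ∏_{g ∈ G*} (π̃†_g)^{I_even(g)}. (That is, the population size estimator under the K'-list marginal no-highest-order-interaction assumption using all K lists equals the estimator under the no-highest-order-interaction assumption using only the first K' lists.) -/
/-!
With `c = 1 - π̃_{0+}` we have `π̃† = c⁻¹ π̃_{·+}`, so `Π̃†_odd / Π̃†_even` is `Π̃_{odd,+} / Π̃_{even,+}`
times `c⁻¹` raised to (number of odd-weight minus number of even-weight vectors in `G*`).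
That difference is `1`: over the whole cube `∑_g (-1)^{|g|} = ∏_k (1 - 1) = 0`, and the removed
vector `0` has even weight. Hence
`n† (1 + Π̃†_odd / Π̃†_even) = n c (1 + c⁻¹ Π̃_{odd,+} / Π̃_{even,+}) = n (c + Π̃_{odd,+} / Π̃_{even,+})`.
-/

open Finset

/-- `H* = {0,1}^K \ {(0,...,0)}` as a finset. -/
def Hstar (K : ℕ) : Finset (Fin K → Bool) :=
  Finset.univ.filter (fun h => h ≠ (fun _ => false))

/-- `∏_{h ∈ s} p(h)^{I_odd(h)}`, where `I_odd(h) = I(∑_k h_k odd)`. -/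
noncomputable def pOdd {K : ℕ} (s : Finset (Fin K → Bool)) (p : (Fin K → Bool) → ℝ) : ℝ :=
  ∏ h ∈ s, if Odd (∑ k, (h k).toNat) then p h else 1

/-- `∏_{h ∈ s} p(h)^{I_even(h)}`, where `I_even(h) = I(∑_k h_k even)`. -/
noncomputable def pEven {K : ℕ} (s : Finset (Fin K → Bool)) (p : (Fin K → Bool) → ℝ) : ℝ :=
  ∏ h ∈ s, if Even (∑ k, (h k).toNat) then p h else 1

lemma sum_neg_one_pow_sum_toNat_eq_zero {k : ℕ} (hk : k ≠ 0) :
    ∑ g : Fin k → Bool, (-1 : ℤ) ^ (∑ i, (g i).toNat) = 0 := by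
  simp_rw [← prod_pow_eq_pow_sum,
    ← Fintype.prod_sum (fun (_ : Fin k) (b : Bool) => (-1 : ℤ) ^ b.toNat), Fintype.sum_bool]
  exact prod_eq_zero (mem_univ ⟨0, Nat.pos_of_ne_zero hk⟩) (by norm_num)

lemma card_filter_odd_sum_toNat_eq_card_filter_even {k : ℕ} (hk : k ≠ 0) :
    #{g : Fin k → Bool | Odd (∑ i, (g i).toNat)} =
      #{g : Fin k → Bool | Even (∑ i, (g i).toNat)} := by
  have hsigned (g : Fin k → Bool) : (-1 : ℤ) ^ (∑ i, (g i).toNat) =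
      (if Even (∑ i, (g i).toNat) then 1 else 0) - (if Odd (∑ i, (g i).toNat) then 1 else 0) := by
    rcases Nat.even_or_odd (∑ i, (g i).toNat) with h | h
    · rw [if_pos h, if_neg (Nat.not_odd_iff_even.mpr h), h.neg_one_pow, sub_zero]
    · rw [if_neg (Nat.not_even_iff_odd.mpr h), if_pos h, h.neg_one_pow, zero_sub]
  have := sum_neg_one_pow_sum_toNat_eq_zero hk
  simp only [hsigned, sum_sub_distrib, sum_boole] at this
  omega

lemma card_Hstar_filter_odd_eq_succ {k : ℕ} (hk : k ≠ 0) :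
    #{g ∈ Hstar k | Odd (∑ i, (g i).toNat)} = #{g ∈ Hstar k | Even (∑ i, (g i).toNat)} + 1 := by
  have hodd : {g ∈ Hstar k | Odd (∑ i, (g i).toNat)} =
      ({g | Odd (∑ i, (g i).toNat)} : Finset (Fin k → Bool)) := by
    ext g
    simp only [Hstar, mem_filter, mem_univ, true_and, and_iff_right_iff_imp]
    rintro h rfl
    simp at h
  have heven : {g ∈ Hstar k | Even (∑ i, (g i).toNat)} =
      ({g | Even (∑ i, (g i).toNat)} : Finset (Fin k → Bool)).erase (fun _ => false) := by
    ext g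
    simp [Hstar, and_comm]
  rw [hodd, heven, card_erase_of_mem (by simp),
    card_filter_odd_sum_toNat_eq_card_filter_even hk, Nat.sub_add_cancel]
  exact card_pos.mpr ⟨fun _ => false, by simp⟩

lemma Finset.prod_ite_mul_const {ι M : Type*} [CommMonoid M] (s : Finset ι) (P : ι → Prop)
    [DecidablePred P] (f : ι → M) (c : M) :
    ∏ a ∈ s, (if P a then f a * c else 1) =
      (∏ a ∈ s, if P a then f a else 1) * c ^ #{a ∈ s | P a} := by
  simp only [prod_ite, prod_const_one, mul_one, prod_mul_distrib, prod_const]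

lemma pOdd_div_pEven_mul_const {k : ℕ} (hk : k ≠ 0) (p : (Fin k → Bool) → ℝ) (c : ℝ) :
    pOdd (Hstar k) (fun g => p g * c) / pEven (Hstar k) (fun g => p g * c) =
      pOdd (Hstar k) p / pEven (Hstar k) p * c := by
  simp only [pOdd, pEven, prod_ite_mul_const, card_Hstar_filter_odd_eq_succ hk, pow_succ]
  rcases eq_or_ne (c ^ #{g ∈ Hstar k | Even (∑ i, (g i).toNat)}) 0 with h | h
  · simp [eq_zero_of_pow_eq_zero h]
  · rw [← mul_assoc, mul_right_comm, mul_div_mul_right _ _ h, mul_div_right_comm]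

theorem stmt8_general (K' : ℕ) (hK'1 : 1 < K')
    (ntot : ℝ)
    (m : (Fin K' → Bool) → ℝ)
    (hm0 : m (fun _ => false) < 1)
    (ndag : ℝ) (hndag : ndag = ntot * (1 - m (fun _ => false)))
    (tdag : (Fin K' → Bool) → ℝ)
    (htdag : ∀ g, tdag g = m g / (1 - m (fun _ => false))) :
    ntot * (1 + pOdd (Hstar K') m / pEven (Hstar K') m - m (fun _ => false)) =
      ndag * (1 + pOdd (Hstar K') tdag / pEven (Hstar K') tdag) := by
  have hc : 1 - m (fun _ => false) ≠ 0 := by linarith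
  have htdag_eq : tdag = fun g => m g * (1 - m (fun _ => false))⁻¹ := funext htdag
  rw [hndag, htdag_eq, pOdd_div_pEven_mul_const (by omega)]
  field_simp
  ring

/-- equality of the population size estimator under the `K'`-list marginal
no-highest-order-interaction assumption using all `K` lists with the estimator under the
no-highest-order-interaction assumption using only the first `K'` lists:
`n·[1 + Π̃_{odd,+}/Π̃_{even,+} - π̃_{0+}] = n†·[1 + Π̃†_odd/Π̃†_even]`. -/
theorem stmt8 (K K' : ℕ) (hK : 3 ≤ K) (hK'1 : 1 < K') (hK'K : K' < K)
    (n : (Fin K → Bool) → ℝ) (hn : ∀ h ∈ Hstar K, 0 ≤ n h)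
    (ntot : ℝ) (hntot : ntot = ∑ h ∈ Hstar K, n h) (hpos : 0 < ntot)
    (tπ : (Fin K → Bool) → ℝ) (htπ : ∀ h, tπ h = n h / ntot)
    (m : (Fin K' → Bool) → ℝ)
    (hm : ∀ g, m g = ∑ h ∈ Hstar K,
        if (fun i : Fin K' => h (Fin.castLE hK'K.le i)) = g then tπ h else 0)
    (hmpos : ∀ g ∈ Hstar K', 0 < m g)
    (hm0 : m (fun _ => false) < 1)
    (ndag : ℝ) (hndag : ndag = ntot * (1 - m (fun _ => false)))
    (tdag : (Fin K' → Bool) → ℝ)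
    (htdag : ∀ g, tdag g = m g / (1 - m (fun _ => false))) :
    ntot * (1 + pOdd (Hstar K') m / pEven (Hstar K') m - m (fun _ => false)) =
      ndag * (1 + pOdd (Hstar K') tdag / pEven (Hstar K') tdag) :=
  stmt8_general K' hK'1 ntot m hm0 ndag hndag tdag htdag
end

section
/- Let 1 < K' < K, let π = (π_h)_{h ∈ H} be positive reals summing to 1 with π_0 the value at h = (0,...,0), and let π̃_h = π_h/(1-π_0) for h ∈ H*. Define marginal probabilities π_{g+} = ∑_{h ∈ H} π_h I((h_1,...,h_{K'}) = g) for g ∈ G = {0,1}^{K'}, the conditional marginals π̃_{g+} = ∑_{h ∈ H*} π̃_h I((h_1,...,h_{K'}) = g) for g ∈ G*, and π̃_{0+} = ∑_{h ∈ H*} π̃_h I((h_1,...,h_{K'}) = (0,...,0)). For any ξ > 0, the equality ∏_{g ∈ G} π_{g+}^{I_odd(g)} / ∏_{g ∈ G} π_{g+}^{I_even(g)} = ξ holds if and only if π_0 = (Π̃_{odd,+}/Π̃_{even,+} - ξ·π̃_{0+}) / (ξ + Π̃_{odd,+}/Π̃_{even,+} - ξ·π̃_{0+}), where Π̃_{odd,+}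 = ∏_{g ∈ G*} π̃_{g+}^{I_odd(g)} and Π̃_{even,+} = ∏_{g ∈ G*} π̃_{g+}^{I_even(g)}. -/
open Finset

/-! Off the zero pattern the marginal `π_{g+}` equals `(1 - π_0) π̃_{g+}`, while
`π_{0+} = π_0 + (1 - π_0) π̃_{0+}`. Since `{0,1}^{K'}` contains as many odd as even patterns and
the zero pattern is even, all but one factor `1 - π_0` cancel, so the marginal interaction is
`(1 - π_0) R / (π_0 + (1 - π_0) π̃_{0+})` with `R = Π̃_{odd,+} / Π̃_{even,+}`; setting this equal
to `ξ` gives an equation linear in `π_0`. -/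

open Function

lemma odd_sum_toNat_update_not_iff {ι : Type*} [Fintype ι] [DecidableEq ι] (g : ι → Bool)
    (i : ι) : Odd (∑ k, (update g i (!g i) k).toNat) ↔ Even (∑ k, (g k).toNat) := by
  have hupd : ∑ k ∈ univ.erase i, (update g i (!g i) k).toNat = ∑ k ∈ univ.erase i, (g k).toNat :=
    sum_congr rfl fun k hk => by rw [update_of_ne (ne_of_mem_erase hk)]
  rw [← add_sum_erase _ _ (mem_univ i), ← add_sum_erase _ _ (mem_univ i), hupd, update_self]
  cases g i <;> simp [Nat.even_add_one, parity_simps]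

lemma card_filter_odd_sum_toNat {ι : Type*} [Fintype ι] [DecidableEq ι] [Nonempty ι] :
    #(univ.filter fun g : ι → Bool => Odd (∑ k, (g k).toNat)) =
      #(univ.filter fun g : ι → Bool => Even (∑ k, (g k).toNat)) := by
  obtain ⟨i⟩ := ‹Nonempty ι›
  have hinv (g : ι → Bool) : update (update g i (!g i)) i (!update g i (!g i) i) = g := by simp
  refine card_nbij' (fun g => update g i (!g i)) (fun g => update g i (!g i))
    (fun g hg => ?_) (fun g hg => ?_) (fun g _ => hinv g) (fun g _ => hinv g)
  · simp only [coe_filter, mem_univ, true_and, Set.mem_ofPred_eq] at hg ⊢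
    rw [← hinv g] at hg
    exact (odd_sum_toNat_update_not_iff _ i).mp hg
  · simp only [coe_filter, mem_univ, true_and, Set.mem_ofPred_eq] at hg ⊢
    exact (odd_sum_toNat_update_not_iff g i).mpr hg

lemma prod_eq_pow_card_mul {α M : Type*} [CommMonoid M] {s : Finset α} {f t : α → M} {c : M}
    (h : ∀ a ∈ s, f a = c * t a) : ∏ a ∈ s, f a = c ^ #s * ∏ a ∈ s, t a := by
  rw [← prod_const, ← prod_mul_distrib]
  exact prod_congr rfl h

lemma Hstar_eq_erase (n : ℕ) : Hstar n = univ.erase (fun _ => false) :=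
  filter_ne' _ _

section Hstar

variable {n : ℕ}

lemma card_filter_odd_Hstar (hn : 0 < n) :
    #((Hstar n).filter fun g => Odd (∑ k, (g k).toNat)) =
      #((Hstar n).filter fun g => Even (∑ k, (g k).toNat)) + 1 := by
  have : Nonempty (Fin n) := ⟨⟨0, hn⟩⟩
  have hzero : (fun _ => false) ∈ univ.filter fun g : Fin n → Bool => Even (∑ k, (g k).toNat) := by
    simp
  rw [Hstar_eq_erase, filter_erase, filter_erase, card_erase_of_mem hzero,
    erase_eq_of_notMem (by simp), card_filter_odd_sum_toNat,
    Nat.sub_add_cancel (card_pos.mpr ⟨_, hzero⟩)]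

lemma pOdd_univ (f : (Fin n → Bool) → ℝ) : pOdd univ f = pOdd (Hstar n) f := by
  rw [Hstar_eq_erase, pOdd, pOdd, prod_erase]
  simp

lemma pEven_univ (f : (Fin n → Bool) → ℝ) :
    pEven univ f = f (fun _ => false) * pEven (Hstar n) f := by
  rw [Hstar_eq_erase, pEven, pEven, ← mul_prod_erase _ _ (mem_univ (fun _ => false))]
  simp

end Hstar

section ScaledProducts

variable {n : ℕ} {s : Finset (Fin n → Bool)} {f t : (Fin n → Bool) → ℝ} {c : ℝ}

lemma pOdd_eq_pow_mul (h : ∀ g ∈ s, f g = c * t g) :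
    pOdd s f = c ^ #(s.filter fun g => Odd (∑ k, (g k).toNat)) * pOdd s t := by
  simp only [pOdd, ← prod_filter]
  exact prod_eq_pow_card_mul fun g hg => h g (mem_of_mem_filter g hg)

lemma pEven_eq_pow_mul (h : ∀ g ∈ s, f g = c * t g) :
    pEven s f = c ^ #(s.filter fun g => Even (∑ k, (g k).toNat)) * pEven s t := by
  simp only [pEven, ← prod_filter]
  exact prod_eq_pow_card_mul fun g hg => h g (mem_of_mem_filter g hg)

lemma pOdd_div_pEven_univ (hn : 0 < n) (hc : c ≠ 0) (h : ∀ g ∈ Hstar n, f g = c * t g) :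
    pOdd univ f / pEven univ f =
      c * (pOdd (Hstar n) t / pEven (Hstar n) t) / f (fun _ => false) := by
  rw [pOdd_univ, pEven_univ, pOdd_eq_pow_mul h, pEven_eq_pow_mul h, card_filter_odd_Hstar hn,
    pow_succ]
  set e := #((Hstar n).filter fun g => Even (∑ k, (g k).toNat))
  calc c ^ e * c * pOdd (Hstar n) t / (f (fun _ => false) * (c ^ e * pEven (Hstar n) t))
      = c ^ e * (c * pOdd (Hstar n) t) / (c ^ e * (f (fun _ => false) * pEven (Hstar n) t)) := by
        ring
    _ = _ := by rw [mul_div_mul_left _ _ (pow_ne_zero e hc)]; ring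

end ScaledProducts

lemma mixture_odds_eq_iff {p t R ξ : ℝ} (hp : p ≠ 0) (hξ : ξ ≠ 0) (hm : p + (1 - p) * t ≠ 0) :
    (1 - p) * R / (p + (1 - p) * t) = ξ ↔ p = (R - ξ * t) / (ξ + (R - ξ * t)) := by
  rw [div_eq_iff hm]
  constructor
  · intro h
    have hD : ξ + (R - ξ * t) ≠ 0 := by
      intro hD
      have hN : R - ξ * t = 0 := by linear_combination h + p * hD
      exact hξ (by linear_combination hD - hN)
    rw [eq_div_iff hD]
    linear_combination -h
  · intro h
    have hD : ξ + (R - ξ * t) ≠ 0 := fun hD => hp (by rw [h, hD, div_zero])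
    rw [eq_div_iff hD] at h
    linear_combination -h

lemma sum_ite_eq_add_mul_sum_Hstar {K : ℕ} {β : Type*} [DecidableEq β]
    (P : (Fin K → Bool) → β) (π : (Fin K → Bool) → ℝ) {c : ℝ} (hc : c ≠ 0) (g : β) :
    (∑ h, if P h = g then π h else 0) =
      (if P (fun _ => false) = g then π (fun _ => false) else 0) +
        c * ∑ h ∈ Hstar K, if P h = g then π h / c else 0 := by
  rw [Hstar_eq_erase, mul_sum, ← add_sum_erase _ _ (mem_univ _)]
  congr 1
  refine sum_congr rfl fun h _ => ?_
  split_ifs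
  · field_simp
  · ring

theorem stmt11_general (K K' : ℕ) (hK'1 : 1 < K') (hK'K : K' < K)
    (π : (Fin K → Bool) → ℝ) (hπ : ∀ h, 0 < π h) (hs : ∑ h, π h = 1)
    (tπ : (Fin K → Bool) → ℝ)
    (htπ : ∀ h, tπ h = π h / (1 - π (fun _ => false)))
    (mfull : (Fin K' → Bool) → ℝ)
    (hmfull : ∀ g, mfull g = ∑ h : Fin K → Bool,
        if (fun i : Fin K' => h (Fin.castLE hK'K.le i)) = g then π h else 0)
    (tm : (Fin K' → Bool) → ℝ)
    (htm : ∀ g, tm g = ∑ h ∈ Hstar K,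
        if (fun i : Fin K' => h (Fin.castLE hK'K.le i)) = g then tπ h else 0)
    (ξ : ℝ) (hξ : 0 < ξ) :
    pOdd Finset.univ mfull / pEven Finset.univ mfull = ξ ↔
      π (fun _ => false) =
        (pOdd (Hstar K') tm / pEven (Hstar K') tm - ξ * tm (fun _ => false)) /
          (ξ + (pOdd (Hstar K') tm / pEven (Hstar K') tm - ξ * tm (fun _ => false))) := by
  have hc : 1 - π (fun _ => false) ≠ 0 := by
    have hne : (fun _ => true : Fin K → Bool) ≠ fun _ => false :=
      fun h => by simpa using congrFun h ⟨0, by omega⟩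
    have := single_lt_sum hne (mem_univ _) (mem_univ _) (hπ _) fun h _ _ => (hπ h).le
    linarith
  have hmarg : ∀ g, mfull g = (if (fun _ => false) = g then π (fun _ => false) else 0) +
      (1 - π (fun _ => false)) * tm g := fun g => by
    simp only [hmfull, htm, htπ]
    exact sum_ite_eq_add_mul_sum_Hstar _ π hc g
  have hm0 : 0 < mfull (fun _ => false) := by
    rw [hmfull]
    exact lt_of_lt_of_le (by simpa using hπ _)
      (single_le_sum (fun h _ => by split_ifs <;> simp [(hπ h).le]) (mem_univ (fun _ => false)))
  rw [pOdd_div_pEven_univ (by omega) hc fun g hg => by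
    rw [hmarg, if_neg (mem_filter.mp hg).2.symm, zero_add]]
  rw [hmarg, if_pos rfl] at hm0 ⊢
  exact mixture_odds_eq_iff (hπ _).ne' hξ.ne' hm0.ne'

/-- for positive cell probabilities `π` on `H = {0,1}^K` summing to one,
`K'`-list marginal probabilities `π_{g+}` and conditional marginals `π̃_{g+}` (including
`π̃_{0+}`), and any `ξ > 0`: the `K'`-list marginal highest-order interaction equals `ξ`,
i.e. `∏_g π_{g+}^{I_odd(g)} / ∏_g π_{g+}^{I_even(g)} = ξ`, iff
`π_0 = (Π̃_{odd,+}/Π̃_{even,+} - ξ·π̃_{0+}) / (ξ + Π̃_{odd,+}/Π̃_{even,+} - ξ·π̃_{0+})`. -/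
theorem stmt11 (K K' : ℕ) (hK : 3 ≤ K) (hK'1 : 1 < K') (hK'K : K' < K)
    (π : (Fin K → Bool) → ℝ) (hπ : ∀ h, 0 < π h) (hs : ∑ h, π h = 1)
    (tπ : (Fin K → Bool) → ℝ)
    (htπ : ∀ h, tπ h = π h / (1 - π (fun _ => false)))
    (mfull : (Fin K' → Bool) → ℝ)
    (hmfull : ∀ g, mfull g = ∑ h : Fin K → Bool,
        if (fun i : Fin K' => h (Fin.castLE hK'K.le i)) = g then π h else 0)
    (tm : (Fin K' → Bool) → ℝ)
    (htm : ∀ g, tm g = ∑ h ∈ Hstar K,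
        if (fun i : Fin K' => h (Fin.castLE hK'K.le i)) = g then tπ h else 0)
    (ξ : ℝ) (hξ : 0 < ξ) :
    pOdd Finset.univ mfull / pEven Finset.univ mfull = ξ ↔
      π (fun _ => false) =
        (pOdd (Hstar K') tm / pEven (Hstar K') tm - ξ * tm (fun _ => false)) /
          (ξ + (pOdd (Hstar K') tm / pEven (Hstar K') tm - ξ * tm (fun _ => false))) :=
  stmt11_general K K' hK'1 hK'K π hπ hs tπ htπ mfull hmfull tm htm ξ hξ
end

section
/- Let λ = (λ_{h'})_{h' ∈ H*} be real log-linear parameters, define μ_h = exp(∑_{h' ∈ H*} λ_{h'} ∏_{k=1}^K h_k^{h'_k}) for h ∈ H (so μ at h = (0,...,0) equals 1), and define cell probabilities π_h = μ_h / ∑_{h'' ∈ H} μ_{h''}. Then ∏_{h ∈ H} π_h^{I_odd(h)} / ∏_{h ∈ H} π_h^{I_even(h)} = exp((-1)^{K+1} λ_1), where λ_1 is the highest-order interaction parameter λ_{(1,...,1)}. -/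
open Finset

/-!
Taking logarithms, `log (Π_odd / Π_even) = -∑_h (-1)^{|h|} log π_h`, and `log π_h` is the
log-linear predictor minus the normalising constant `log ∑ μ`. The signed sum factorises over the
coordinates: `∑_h (-1)^{|h|} ∏_k h_k^{h'_k} = ∏_k ∑_{b ∈ {0,1}} (-1)^b b^{h'_k}`, whose `k`-th factor
is `-1` if `h'_k = 1` and `0` otherwise. So only `h' = (1,...,1)` survives, with weight `(-1)^K`,
and the normalising constant drops out because it is the case `h' = 0`.
-/

section ParityCharacter

variable {ι R : Type*} [Fintype ι] [DecidableEq ι] [CommRing R]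

theorem Bool.sum_neg_one_pow_toNat_mul_ite_pow (c : Bool) :
    ∑ b : Bool, (-1 : R) ^ b.toNat * (if b then (1 : R) else 0) ^ c.toNat =
      if c then -1 else 0 := by
  cases c <;> simp

theorem sum_neg_one_pow_mul_prod_ite_pow (h' : ι → Bool) :
    ∑ h : ι → Bool, (-1 : R) ^ (∑ k, (h k).toNat) * ∏ k, (if h k then (1 : R) else 0) ^ (h' k).toNat =
      if h' = (fun _ => true) then (-1) ^ Fintype.card ι else 0 := by
  simp_rw [← Finset.prod_pow_eq_pow_sum, ← Finset.prod_mul_distrib]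
  rw [← Fintype.prod_sum fun k (b : Bool) =>
    (-1 : R) ^ b.toNat * (if b then (1 : R) else 0) ^ (h' k).toNat]
  simp_rw [Bool.sum_neg_one_pow_toNat_mul_ite_pow, Fintype.prod_ite_zero, Finset.prod_const,
    Finset.card_univ, funext_iff]

theorem sum_neg_one_pow_toNat [Nonempty ι] :
    ∑ h : ι → Bool, (-1 : R) ^ (∑ k, (h k).toNat) = 0 := by
  have hne : (fun _ : ι => false) ≠ (fun _ => true) := fun h =>
    Bool.false_ne_true (congrFun h (Classical.arbitrary ι))
  simpa [hne] using sum_neg_one_pow_mul_prod_ite_pow (R := R) (fun _ : ι => false)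

theorem sum_neg_one_pow_mul_loglinear (s : Finset (ι → Bool)) (lam : (ι → Bool) → R) :
    ∑ h : ι → Bool, (-1 : R) ^ (∑ k, (h k).toNat) *
        ∑ h' ∈ s, lam h' * ∏ k, (if h k then (1 : R) else 0) ^ (h' k).toNat =
      if (fun _ => true) ∈ s then (-1) ^ Fintype.card ι * lam (fun _ => true) else 0 := by
  simp_rw [Finset.mul_sum]
  rw [Finset.sum_comm]
  simp_rw [mul_left_comm _ (lam _), ← Finset.mul_sum, sum_neg_one_pow_mul_prod_ite_pow,
    mul_ite, mul_zero, mul_comm (lam _)]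
  exact Finset.sum_ite_eq' s _ _

end ParityCharacter

section OddEvenRatio

variable {K : ℕ} (s : Finset (Fin K → Bool)) (g : (Fin K → Bool) → ℝ)

theorem pOdd_exp :
    pOdd s (fun h => Real.exp (g h)) =
      Real.exp (∑ h ∈ s, if Odd (∑ k, (h k).toNat) then g h else 0) := by
  simp only [pOdd, Real.exp_sum, apply_ite Real.exp, Real.exp_zero]

theorem pEven_exp :
    pEven s (fun h => Real.exp (g h)) =
      Real.exp (∑ h ∈ s, if Even (∑ k, (h k).toNat) then g h else 0) := by
  simp only [pEven, Real.exp_sum, apply_ite Real.exp, Real.exp_zero]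

theorem pOdd_div_pEven_exp :
    pOdd s (fun h => Real.exp (g h)) / pEven s (fun h => Real.exp (g h)) =
      Real.exp (-∑ h ∈ s, (-1 : ℝ) ^ (∑ k, (h k).toNat) * g h) := by
  rw [pOdd_exp, pEven_exp, ← Real.exp_sub, ← Finset.sum_sub_distrib, ← Finset.sum_neg_distrib]
  refine congrArg Real.exp (Finset.sum_congr rfl fun h _ => ?_)
  rcases Nat.even_or_odd (∑ k, (h k).toNat) with hn | hn
  · simp [hn, hn.neg_one_pow, Nat.not_odd_iff_even.mpr hn]
  · simp [hn, hn.neg_one_pow, Nat.not_even_iff_odd.mpr hn]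

end OddEvenRatio

/-- for log-linear parameters `λ = (λ_{h'})_{h' ∈ H*}`, with
`μ_h = exp(∑_{h' ∈ H*} λ_{h'} ∏_k h_k^{h'_k})` and `π_h = μ_h / ∑_{h''} μ_{h''}`, one has
`Π_odd/Π_even = exp((-1)^{K+1} λ_{(1,...,1)})`. -/
theorem stmt14 (K : ℕ) (hK : 1 ≤ K)
    (lam μ π : (Fin K → Bool) → ℝ)
    (hμ : ∀ h, μ h = Real.exp (∑ h' ∈ Hstar K,
        lam h' * ∏ k, (if h k then (1 : ℝ) else 0) ^ (h' k).toNat))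
    (hπ : ∀ h, π h = μ h / ∑ h'' : Fin K → Bool, μ h'') :
    pOdd Finset.univ π / pEven Finset.univ π =
      Real.exp ((-1 : ℝ) ^ (K + 1) * lam (fun _ => true)) := by
  have : NeZero K := ⟨by omega⟩
  set f : (Fin K → Bool) → ℝ := fun h => ∑ h' ∈ Hstar K,
    lam h' * ∏ k, (if h k then (1 : ℝ) else 0) ^ (h' k).toNat
  set S := ∑ h'' : Fin K → Bool, μ h''
  have hS : 0 < S := Finset.sum_pos (fun h _ => hμ h ▸ Real.exp_pos _) Finset.univ_nonempty
  have hπ_exp : π = fun h => Real.exp (f h - Real.log S) :=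
    funext fun h => by rw [hπ, hμ, Real.exp_sub, Real.exp_log hS]
  have h_top : (fun _ => true) ∈ Hstar K := by
    simp [Hstar, funext_iff]
  rw [hπ_exp, pOdd_div_pEven_exp]
  congr 1
  calc -∑ h, (-1 : ℝ) ^ (∑ k, (h k).toNat) * (f h - Real.log S)
      = -∑ h, (-1 : ℝ) ^ (∑ k, (h k).toNat) * f h +
          Real.log S * ∑ h : Fin K → Bool, (-1 : ℝ) ^ (∑ k, (h k).toNat) := by
        simp only [mul_sub, Finset.sum_sub_distrib, Finset.mul_sum]
        ring_nf
    _ = (-1) ^ (K + 1) * lam (fun _ => true) := by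
        rw [sum_neg_one_pow_mul_loglinear, if_pos h_top, sum_neg_one_pow_toNat, Fintype.card_fin]
        ring
end
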